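/- arXiv:1406.6256 — 4 statements merged into one kernel-verified Lean document; each statement's English description precedes it below -/
import Mathlib

section
/- Let (T*M, ρ, [[-,-]]) be a Lie algebroid structure on the cotangent bundle of a manifold M satisfying [[df, dg]] = d(ρ(df)(g)) and ρ(df)(g) + ρ(dg)(f) = 0 for all f, g ∈ C^∞(M). Then the bracket {f,g} := ρ(df)(g) is a Poisson structure on M: it is ℝ-bilinear, antisymmetric, satisfies the Leibniz rule {f, gh} = {f,g}h + g{f,h}, and satisfies the Jacobi identity. -/
/-- Let `(T*M, ρ, br)` be a Lie algebroid structure on the cotangent bundle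
(here `Ω1` models `Γ(T*M) = Ω¹(M)`, `R = C^∞(M)`, vector fields are derivations of `R`,
and `d` is the de Rham differential on functions) satisfying
`br (df) (dg) = d (ρ(df) g)` and `ρ(df) g + ρ(dg) f = 0`. Then `{f,g} := ρ(df) g` is a
Poisson structure: ℝ-bilinear, antisymmetric, Leibniz in each entry, and Jacobi. -/
theorem cotangent_algebroid_gives_poisson
    {R Ω1 : Type*} [CommRing R] [Algebra ℝ R]
    [AddCommGroup Ω1] [Module R Ω1] [Module ℝ Ω1] [IsScalarTower ℝ R Ω1]
    -- de Rham differential on functions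
    (d : R → Ω1)
    (hd_add : ∀ f g : R, d (f + g) = d f + d g)
    (hd_smul : ∀ (a : ℝ) (f : R), d (a • f) = a • d f)
    (hd_mul : ∀ f g : R, d (f * g) = f • d g + g • d f)
    -- Lie algebroid structure on T*M
    (ρ : Ω1 →ₗ[R] Derivation ℝ R R)
    (br : Ω1 → Ω1 → Ω1)
    (hbr_add₁ : ∀ α β γ : Ω1, br (α + β) γ = br α γ + br β γ)
    (hbr_add₂ : ∀ α β γ : Ω1, br α (β + γ) = br α β + br α γ)
    (hbr_anti : ∀ α β : Ω1, br α β = - br β α)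
    (hbr_jacobi : ∀ α β γ : Ω1, br α (br β γ) = br (br α β) γ + br β (br α γ))
    (hbr_leib : ∀ (α : Ω1) (f : R) (β : Ω1), br α (f • β) = (ρ α) f • β + f • br α β)
    (hanchor : ∀ α β : Ω1, ρ (br α β) = ⁅ρ α, ρ β⁆)
    -- the two compatibility conditions
    (h1 : ∀ f g : R, br (d f) (d g) = d ((ρ (d f)) g))
    (h2 : ∀ f g : R, (ρ (d f)) g + (ρ (d g)) f = 0) :
    -- {f,g} := ρ(df)(g) is a Poisson bracket:
    (∀ f g : R, (ρ (d f)) g = - (ρ (d g)) f) ∧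
    (∀ (a b : ℝ) (f g h : R),
      (ρ (d (a • f + b • g))) h = a • (ρ (d f)) h + b • (ρ (d g)) h ∧
      (ρ (d h)) (a • f + b • g) = a • (ρ (d h)) f + b • (ρ (d h)) g) ∧
    (∀ f g h : R, (ρ (d f)) (g * h) = (ρ (d f)) g * h + g * (ρ (d f)) h) ∧
    (∀ f g h : R,
      (ρ (d f)) ((ρ (d g)) h)
        = (ρ (d ((ρ (d f)) g))) h + (ρ (d g)) ((ρ (d f)) h)) := by
  refine ⟨?_, ?_, ?_, ?_⟩
  · intro f g
    exact eq_neg_of_add_eq_zero_left (h2 f g)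
  · intro a b f g h
    constructor
    · rw [hd_add, hd_smul, hd_smul, map_add]
      have ha : ρ (a • d f) = a • ρ (d f) := by
        rw [← algebraMap_smul R a (d f), map_smul, algebraMap_smul]
      have hb : ρ (b • d g) = b • ρ (d g) := by
        rw [← algebraMap_smul R b (d g), map_smul, algebraMap_smul]
      rw [ha, hb]
      simp
    · rw [map_add, Derivation.map_smul_of_tower, Derivation.map_smul_of_tower]
  · intro f g h
    have := Derivation.leibniz (ρ (d f)) g h
    simp only [smul_eq_mul] at this
    rw [this]; ring
  · intro f g h
    have key : ρ (d ((ρ (d f)) g)) = ⁅ρ (d f), ρ (d g)⁆ := by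
      rw [← h1, hanchor]
    have := congrArg (fun D : Derivation ℝ R R => D h) key
    simp only [Derivation.commutator_apply] at this
    rw [this]; ring
end

section
/- Let A → M be a Lie algebroid with anchor ρ and bracket [[-,-]], let B ⊂ A be a vector subbundle, and let ∇ be a flat TM-connection on the quotient bundle A/B. Suppose (TM, B, ∇) is an IM foliation of A over TM, i.e.: B is a Lie subalgebroid of A, and the sections X of A whose class X mod B is ∇-flat form a Lie subalgebra of Γ(A) containing Γ(B) as a Lie ideal. Then the formula ∇^{A/B}_X (Y mod B) := ∇_{ρ(Y)}(X mod B) − [[Y,X]] mod B gives a well-defined flat A-connection on A/B. -/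
/-! For `Y ∈ Γ(B)` one has `∇_{ρ Y}(X mod B) = [[Y, X]] mod B`: the difference of the two
sides is `C^∞(M)`-linear in `X` and vanishes on flat sections (`Γ(B)` is an ideal among them)
and on `Γ(B)` (a subalgebroid); flat sections and `Γ(B)` together span `Γ(A)`. Hence the
formula does not depend on the representative `Y` of `Y mod B`.

The curvature of an `A`-connection is `C^∞(M)`-trilinear, so flatness need only be checked on
flat sections and sections of `B`. A flat section `X` acts on flat classes by `[[X, -]]`, a
section of `B` kills them, and the remaining case is the Jacobi identity. -/

open Submodule

theorem Submodule.span_union_eq_top_of_span_image_mk_eq_top {R M : Type*} [Ring R]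
    [AddCommGroup M] [Module R M] {p : Submodule R M} {s : Set M}
    (h : span R ((Submodule.Quotient.mk : M → M ⧸ p) '' s) = ⊤) : span R (s ∪ p) = ⊤ := by
  rw [span_union, span_eq, sup_comm, ← map_mkQ_eq_top, map_span]
  exact h

section

variable {k R L E : Type*} [CommRing k] [CommRing R] [Algebra k R]
  [AddCommGroup L] [Module R L] [AddCommGroup E] [Module R E]

structure IsLieAlgebroid (ρ : L →ₗ[R] Derivation k R R) (br : L → L → L) : Prop where
  add_bracket : ∀ X Y Z, br (X + Y) Z = br X Z + br Y Z
  bracket_add : ∀ X Y Z, br X (Y + Z) = br X Y + br X Z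
  bracket_anti : ∀ X Y, br X Y = -br Y X
  bracket_bracket : ∀ X Y Z, br X (br Y Z) = br (br X Y) Z + br Y (br X Z)
  bracket_smul : ∀ X (f : R) Y, br X (f • Y) = ρ X f • Y + f • br X Y
  anchor_bracket : ∀ X Y, ρ (br X Y) = ⁅ρ X, ρ Y⁆

/-- An `L`-connection on `E` with anchor `ρ`; for `ρ = LinearMap.id` on `L = Derivation k R R`
this is a `TM`-connection. -/
structure IsConnection (ρ : L →ₗ[R] Derivation k R R) (D : L → E → E) : Prop where
  add_left : ∀ X X' q, D (X + X') q = D X q + D X' q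
  smul_left : ∀ (f : R) X q, D (f • X) q = f • D X q
  add_right : ∀ X q q', D X (q + q') = D X q + D X q'
  smul_right : ∀ X (f : R) q, D X (f • q) = ρ X f • q + f • D X q

namespace IsLieAlgebroid

variable {ρ : L →ₗ[R] Derivation k R R} {br : L → L → L}

theorem sub_bracket (hA : IsLieAlgebroid ρ br) (X Y Z : L) : br (X - Y) Z = br X Z - br Y Z :=
  (AddMonoidHom.mk' (br · Z) fun X Y => hA.add_bracket X Y Z).map_sub X Y

theorem smul_bracket (hA : IsLieAlgebroid ρ br) (f : R) (X Y : L) :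
    br (f • X) Y = f • br X Y - ρ Y f • X := by
  rw [hA.bracket_anti, hA.bracket_smul, hA.bracket_anti X Y]
  module

end IsLieAlgebroid

namespace IsConnection

variable {ρ : L →ₗ[R] Derivation k R R} {D : L → E → E}

theorem sub_left (hD : IsConnection ρ D) (X X' : L) (q : E) : D (X - X') q = D X q - D X' q :=
  (AddMonoidHom.mk' (D · q) fun X X' => hD.add_left X X' q).map_sub X X'

theorem neg_left (hD : IsConnection ρ D) (X : L) (q : E) : D (-X) q = -D X q :=
  (AddMonoidHom.mk' (D · q) fun X X' => hD.add_left X X' q).map_neg X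

theorem zero_right (hD : IsConnection ρ D) (X : L) : D X 0 = 0 :=
  (AddMonoidHom.mk' (D X) (hD.add_right X)).map_zero

end IsConnection

def curvature (br : L → L → L) (D : L → E → E) (X Y : L) (q : E) : E :=
  D X (D Y q) - D Y (D X q) - D (br X Y) q

section Curvature

variable {ρ : L →ₗ[R] Derivation k R R} {br : L → L → L} {D : L → E → E}

theorem curvature_swap (hA : IsLieAlgebroid ρ br) (hD : IsConnection ρ D) (X Y : L) (q : E) :
    curvature br D X Y q = -curvature br D Y X q := by
  simp only [curvature, hA.bracket_anti X Y, hD.neg_left]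
  abel

theorem curvature_add_left (hA : IsLieAlgebroid ρ br) (hD : IsConnection ρ D) (X X' Y : L)
    (q : E) : curvature br D (X + X') Y q = curvature br D X Y q + curvature br D X' Y q := by
  simp only [curvature, hD.add_left, hD.add_right, hA.add_bracket]
  abel

theorem curvature_smul_left (hA : IsLieAlgebroid ρ br) (hD : IsConnection ρ D) (f : R)
    (X Y : L) (q : E) : curvature br D (f • X) Y q = f • curvature br D X Y q := by
  simp only [curvature, hA.smul_bracket, hD.sub_left, hD.smul_left, hD.smul_right]
  module

theorem curvature_add_right (hA : IsLieAlgebroid ρ br) (hD : IsConnection ρ D) (X Y Y' : L)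
    (q : E) : curvature br D X (Y + Y') q = curvature br D X Y q + curvature br D X Y' q := by
  rw [curvature_swap hA hD, curvature_add_left hA hD, curvature_swap hA hD Y,
    curvature_swap hA hD Y', neg_add, neg_neg, neg_neg]

theorem curvature_smul_right (hA : IsLieAlgebroid ρ br) (hD : IsConnection ρ D) (f : R)
    (X Y : L) (q : E) : curvature br D X (f • Y) q = f • curvature br D X Y q := by
  rw [curvature_swap hA hD, curvature_smul_left hA hD, curvature_swap hA hD Y, smul_neg, neg_neg]

theorem curvature_add_apply (hD : IsConnection ρ D) (X Y : L) (q q' : E) :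
    curvature br D X Y (q + q') = curvature br D X Y q + curvature br D X Y q' := by
  simp only [curvature, hD.add_right]
  abel

theorem curvature_smul_apply (hA : IsLieAlgebroid ρ br) (hD : IsConnection ρ D) (X Y : L)
    (f : R) (q : E) : curvature br D X Y (f • q) = f • curvature br D X Y q := by
  simp only [curvature, hD.smul_right, hD.add_right, hA.anchor_bracket,
    Derivation.commutator_apply]
  module

theorem curvature_eq_zero_of_span_eq_top (hA : IsLieAlgebroid ρ br) (hD : IsConnection ρ D)
    {S : Set L} {T : Set E} (hS : span R S = ⊤) (hT : span R T = ⊤)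
    (h : ∀ X ∈ S, ∀ Y ∈ S, ∀ q ∈ T, curvature br D X Y q = 0) (X Y : L) (q : E) :
    curvature br D X Y q = 0 := by
  let K : L →ₗ[R] L →ₗ[R] E →ₗ[R] E := LinearMap.mk₂ R
    (fun X Y => ⟨⟨curvature br D X Y, curvature_add_apply hD X Y⟩,
      fun f q => curvature_smul_apply hA hD X Y f q⟩)
    (fun X X' Y => LinearMap.ext (curvature_add_left hA hD X X' Y))
    (fun f X Y => LinearMap.ext (curvature_smul_left hA hD f X Y))
    (fun X Y Y' => LinearMap.ext (curvature_add_right hA hD X Y Y'))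
    (fun f X Y => LinearMap.ext (curvature_smul_right hA hD f X Y))
  have hK : K = 0 := LinearMap.ext_on hS fun X hX => LinearMap.ext_on hS fun Y hY =>
    LinearMap.ext_on hT fun q hq => h X hX Y hY q hq
  exact LinearMap.congr_fun (LinearMap.congr_fun (LinearMap.congr_fun hK X) Y) q

end Curvature

def flatSections (B : Submodule R L) (nabla : Derivation k R R → L ⧸ B → L ⧸ B) : Set L :=
  {X | ∀ Z, nabla Z (Submodule.Quotient.mk X) = 0}

structure IsIMFoliation (br : L → L → L) (B : Submodule R L)
    (nabla : Derivation k R R → L ⧸ B → L ⧸ B) : Prop where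
  bracket_mem : ∀ X Y, X ∈ B → Y ∈ B → br X Y ∈ B
  bracket_mem_flatSections : ∀ X Y, X ∈ flatSections B nabla → Y ∈ flatSections B nabla →
    br X Y ∈ flatSections B nabla
  bracket_mem_of_mem_flatSections : ∀ X Y, X ∈ flatSections B nabla → Y ∈ B → br X Y ∈ B

noncomputable def inducedConnection (ρ : L →ₗ[R] Derivation k R R) (br : L → L → L)
    (B : Submodule R L) (nabla : Derivation k R R → L ⧸ B → L ⧸ B) (X : L) (q : L ⧸ B) :
    L ⧸ B :=
  nabla (ρ q.out) (Submodule.Quotient.mk X) - Submodule.Quotient.mk (br q.out X)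

section IMFoliation

variable {ρ : L →ₗ[R] Derivation k R R} {br : L → L → L} {B : Submodule R L}
  {nabla : Derivation k R R → L ⧸ B → L ⧸ B}

theorem nabla_anchor_mk_of_mem (hA : IsLieAlgebroid ρ br)
    (hnabla : IsConnection LinearMap.id nabla) (hF : IsIMFoliation br B nabla)
    (hspan : span R (flatSections B nabla ∪ B) = ⊤) {Y : L} (hY : Y ∈ B) (X : L) :
    nabla (ρ Y) (Submodule.Quotient.mk X) = Submodule.Quotient.mk (br Y X) := by
  let δ : L →ₗ[R] L ⧸ B :=
    { toFun X := nabla (ρ Y) (Submodule.Quotient.mk X) - Submodule.Quotient.mk (br Y X)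
      map_add' X X' := by
        simp only [Submodule.Quotient.mk_add, hnabla.add_right, hA.bracket_add]
        abel
      map_smul' f X := by
        simp only [Submodule.Quotient.mk_smul, hnabla.smul_right, hA.bracket_smul,
          Submodule.Quotient.mk_add, LinearMap.id_apply, RingHom.id_apply]
        module }
  have hδ : δ = 0 := LinearMap.ext_on hspan <| by
    rintro X (hX | hX)
    · have hYX : br Y X ∈ B := by
        rw [hA.bracket_anti]
        exact B.neg_mem (hF.bracket_mem_of_mem_flatSections X Y hX hY)
      simp [δ, hX (ρ Y), (Submodule.Quotient.mk_eq_zero B).mpr hYX]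
    · have hYX : br Y X ∈ B := hF.bracket_mem Y X hY hX
      simp [δ, (Submodule.Quotient.mk_eq_zero B).mpr hX,
        (Submodule.Quotient.mk_eq_zero B).mpr hYX, hnabla.zero_right]
  exact sub_eq_zero.mp (LinearMap.congr_fun hδ X)

theorem inducedConnection_mk (hA : IsLieAlgebroid ρ br) (hnabla : IsConnection LinearMap.id nabla)
    (hF : IsIMFoliation br B nabla) (hspan : span R (flatSections B nabla ∪ B) = ⊤) (X Y : L) :
    inducedConnection ρ br B nabla X (Submodule.Quotient.mk Y) =
      nabla (ρ Y) (Submodule.Quotient.mk X) - Submodule.Quotient.mk (br Y X) := by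
  have hY : (Submodule.Quotient.mk Y : L ⧸ B).out - Y ∈ B :=
    (Submodule.Quotient.eq B).mp (Submodule.Quotient.mk_out _)
  have h := nabla_anchor_mk_of_mem hA hnabla hF hspan hY X
  rw [map_sub, hnabla.sub_left, hA.sub_bracket, Submodule.Quotient.mk_sub] at h
  exact sub_eq_sub_iff_sub_eq_sub.mpr h

theorem isConnection_inducedConnection (hA : IsLieAlgebroid ρ br)
    (hnabla : IsConnection LinearMap.id nabla) (hF : IsIMFoliation br B nabla)
    (hspan : span R (flatSections B nabla ∪ B) = ⊤) :
    IsConnection ρ (inducedConnection ρ br B nabla) := by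
  have hmk := inducedConnection_mk hA hnabla hF hspan
  constructor
  · intro X X' q
    obtain ⟨Y, rfl⟩ := Submodule.Quotient.mk_surjective B q
    simp only [hmk, Submodule.Quotient.mk_add, hnabla.add_right, hA.bracket_add]
    abel
  · intro f X q
    obtain ⟨Y, rfl⟩ := Submodule.Quotient.mk_surjective B q
    simp only [hmk, Submodule.Quotient.mk_smul, hnabla.smul_right, hA.bracket_smul,
      Submodule.Quotient.mk_add, LinearMap.id_apply]
    module
  · intro X q q'
    obtain ⟨Y, rfl⟩ := Submodule.Quotient.mk_surjective B q
    obtain ⟨Y', rfl⟩ := Submodule.Quotient.mk_surjective B q'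
    rw [← Submodule.Quotient.mk_add, hmk, hmk, hmk, map_add, hnabla.add_left, hA.add_bracket,
      Submodule.Quotient.mk_add]
    abel
  · intro X f q
    obtain ⟨Y, rfl⟩ := Submodule.Quotient.mk_surjective B q
    rw [← Submodule.Quotient.mk_smul, hmk, hmk, map_smul, hnabla.smul_left, hA.smul_bracket,
      Submodule.Quotient.mk_sub, Submodule.Quotient.mk_smul, Submodule.Quotient.mk_smul]
    module

theorem inducedConnection_mk_of_mem_flatSections (hA : IsLieAlgebroid ρ br)
    (hnabla : IsConnection LinearMap.id nabla) (hF : IsIMFoliation br B nabla)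
    (hspan : span R (flatSections B nabla ∪ B) = ⊤) {X : L} (hX : X ∈ flatSections B nabla)
    (W : L) :
    inducedConnection ρ br B nabla X (Submodule.Quotient.mk W) =
      Submodule.Quotient.mk (br X W) := by
  rw [inducedConnection_mk hA hnabla hF hspan, hX, hA.bracket_anti W X,
    Submodule.Quotient.mk_neg, zero_sub, neg_neg]

theorem inducedConnection_mk_of_mem (hA : IsLieAlgebroid ρ br)
    (hnabla : IsConnection LinearMap.id nabla) (hF : IsIMFoliation br B nabla)
    (hspan : span R (flatSections B nabla ∪ B) = ⊤) {X : L} (hX : X ∈ B) {W : L}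
    (hW : W ∈ flatSections B nabla) :
    inducedConnection ρ br B nabla X (Submodule.Quotient.mk W) = 0 := by
  rw [inducedConnection_mk hA hnabla hF hspan, (Submodule.Quotient.mk_eq_zero B).mpr hX,
    (Submodule.Quotient.mk_eq_zero B).mpr (hF.bracket_mem_of_mem_flatSections W X hW hX),
    hnabla.zero_right, sub_zero]

theorem curvature_inducedConnection_mk (hA : IsLieAlgebroid ρ br)
    (hnabla : IsConnection LinearMap.id nabla) (hF : IsIMFoliation br B nabla)
    (hspan : span R (flatSections B nabla ∪ B) = ⊤) {X Y W : L}
    (hX : X ∈ flatSections B nabla ∪ B) (hY : Y ∈ flatSections B nabla ∪ B)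
    (hW : W ∈ flatSections B nabla) :
    curvature br (inducedConnection ρ br B nabla) X Y (Submodule.Quotient.mk W) = 0 := by
  have hD := isConnection_inducedConnection hA hnabla hF hspan
  have hflat := fun {X} (hX : X ∈ flatSections B nabla) =>
    inducedConnection_mk_of_mem_flatSections hA hnabla hF hspan hX
  have hmem := fun {X W} (hX : X ∈ B) (hW : W ∈ flatSections B nabla) =>
    inducedConnection_mk_of_mem hA hnabla hF hspan hX hW
  rcases hX with hX | hX <;> rcases hY with hY | hY
  · have hXY := hF.bracket_mem_flatSections X Y hX hY
    rw [curvature, hflat hY, hflat hX, hflat hX, hflat hY, hflat hXY,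
      ← Submodule.Quotient.mk_sub, ← Submodule.Quotient.mk_sub, hA.bracket_bracket]
    simp
  · rw [curvature, hmem hY hW, hD.zero_right, hflat hX,
      hmem hY (hF.bracket_mem_flatSections X W hX hW),
      hmem (hF.bracket_mem_of_mem_flatSections X Y hX hY) hW]
    simp
  · have hXY : br X Y ∈ B := by
      rw [hA.bracket_anti]
      exact B.neg_mem (hF.bracket_mem_of_mem_flatSections Y X hY hX)
    rw [curvature, hmem hX hW, hD.zero_right, hflat hY,
      hmem hX (hF.bracket_mem_flatSections Y W hY hW), hmem hXY hW]
    simp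
  · rw [curvature, hmem hX hW, hmem hY hW, hD.zero_right, hD.zero_right,
      hmem (hF.bracket_mem X Y hX hY) hW]
    simp

theorem curvature_inducedConnection (hA : IsLieAlgebroid ρ br)
    (hnabla : IsConnection LinearMap.id nabla) (hF : IsIMFoliation br B nabla)
    (hgen : span R ((Submodule.Quotient.mk : L → L ⧸ B) '' flatSections B nabla) = ⊤)
    (X Y : L) (q : L ⧸ B) : curvature br (inducedConnection ρ br B nabla) X Y q = 0 := by
  have hspan := span_union_eq_top_of_span_image_mk_eq_top hgen
  refine curvature_eq_zero_of_span_eq_top hA (isConnection_inducedConnection hA hnabla hF hspan)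
    hspan hgen ?_ X Y q
  rintro X hX Y hY _ ⟨W, hW, rfl⟩
  exact curvature_inducedConnection_mk hA hnabla hF hspan hX hY hW

end IMFoliation

end

theorem im_foliation_induced_flat_connection_general
    {R ΓA : Type*} [CommRing R] [Algebra ℝ R]
    [AddCommGroup ΓA] [Module R ΓA]
    -- Lie algebroid structure
    (ρ : ΓA →ₗ[R] Derivation ℝ R R)
    (br : ΓA → ΓA → ΓA)
    (hbr_add₁ : ∀ X Y Z : ΓA, br (X + Y) Z = br X Z + br Y Z)
    (hbr_add₂ : ∀ X Y Z : ΓA, br X (Y + Z) = br X Y + br X Z)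
    (hbr_anti : ∀ X Y : ΓA, br X Y = - br Y X)
    (hbr_jacobi : ∀ X Y Z : ΓA, br X (br Y Z) = br (br X Y) Z + br Y (br X Z))
    (hbr_leib : ∀ (X : ΓA) (f : R) (Y : ΓA), br X (f • Y) = (ρ X) f • Y + f • br X Y)
    (hanchor : ∀ X Y : ΓA, ρ (br X Y) = ⁅ρ X, ρ Y⁆)
    -- the subbundle B, a Lie subalgebroid
    (B : Submodule R ΓA)
    (hB_sub : ∀ X Y : ΓA, X ∈ B → Y ∈ B → br X Y ∈ B)
    -- flat TM-connection nabla on A/B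
    (nabla : Derivation ℝ R R → (ΓA ⧸ B) → (ΓA ⧸ B))
    (hnabla_addZ : ∀ (Z W : Derivation ℝ R R) (q : ΓA ⧸ B), nabla (Z + W) q = nabla Z q + nabla W q)
    (hnabla_smulZ : ∀ (f : R) (Z : Derivation ℝ R R) (q : ΓA ⧸ B), nabla (f • Z) q = f • nabla Z q)
    (hnabla_addq : ∀ (Z : Derivation ℝ R R) (q q' : ΓA ⧸ B), nabla Z (q + q') = nabla Z q + nabla Z q')
    (hnabla_leib : ∀ (Z : Derivation ℝ R R) (f : R) (q : ΓA ⧸ B),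
      nabla Z (f • q) = Z f • q + f • nabla Z q)
    -- IM foliation conditions: flat sections form a Lie subalgebra with Γ(B) as ideal
    (hflat_sub : ∀ X Y : ΓA, (∀ Z, nabla Z (Submodule.Quotient.mk X) = 0) →
      (∀ Z, nabla Z (Submodule.Quotient.mk Y) = 0) →
      (∀ Z, nabla Z (Submodule.Quotient.mk (br X Y)) = 0))
    (hflat_ideal : ∀ X Y : ΓA, (∀ Z, nabla Z (Submodule.Quotient.mk X) = 0) →
      Y ∈ B → br X Y ∈ B)
    -- Γ(A/B) is generated by flat classes
    (hgen : Submodule.span R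
      ((Submodule.Quotient.mk : ΓA → ΓA ⧸ B) ''
        {X : ΓA | ∀ Z, nabla Z (Submodule.Quotient.mk X) = 0}) = ⊤) :
    -- conclusion: nabla^{A/B} is well defined, C^∞(M)-linear in X, a derivation over ρ(X),
    -- and flat
    ∃ Dc : ΓA → (ΓA ⧸ B) → (ΓA ⧸ B),
      (∀ X Y : ΓA, Dc X (Submodule.Quotient.mk Y)
        = nabla (ρ Y) (Submodule.Quotient.mk X) - Submodule.Quotient.mk (br Y X)) ∧
      (∀ (X X' : ΓA) (q : ΓA ⧸ B), Dc (X + X') q = Dc X q + Dc X' q) ∧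
      (∀ (f : R) (X : ΓA) (q : ΓA ⧸ B), Dc (f • X) q = f • Dc X q) ∧
      (∀ (X : ΓA) (q q' : ΓA ⧸ B), Dc X (q + q') = Dc X q + Dc X q') ∧
      (∀ (X : ΓA) (f : R) (q : ΓA ⧸ B), Dc X (f • q) = (ρ X) f • q + f • Dc X q) ∧
      (∀ (X Y : ΓA) (q : ΓA ⧸ B), Dc X (Dc Y q) - Dc Y (Dc X q) = Dc (br X Y) q) := by
  have hA : IsLieAlgebroid ρ br := ⟨hbr_add₁, hbr_add₂, hbr_anti, hbr_jacobi, hbr_leib, hanchor⟩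
  have hnabla : IsConnection LinearMap.id nabla :=
    ⟨hnabla_addZ, hnabla_smulZ, hnabla_addq, hnabla_leib⟩
  have hF : IsIMFoliation br B nabla := ⟨hB_sub, hflat_sub, hflat_ideal⟩
  have hspan := span_union_eq_top_of_span_image_mk_eq_top hgen
  have hD := isConnection_inducedConnection hA hnabla hF hspan
  refine ⟨inducedConnection ρ br B nabla, inducedConnection_mk hA hnabla hF hspan,
    hD.add_left, hD.smul_left, hD.add_right, hD.smul_right, fun X Y q => ?_⟩
  exact sub_eq_zero.mp
    (curvature_inducedConnection hA hnabla hF hgen X Y q)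

/-- Let `A → M` be a Lie algebroid (sections `ΓA`, anchor `ρ`, bracket `br`
over `R = C^∞(M)`, vector fields = derivations of `R`), `B ⊂ A` a subbundle which is a
Lie subalgebroid, and `nabla` a flat `TM`-connection on `A/B` such that the sections `X`
with `X mod B` flat form a Lie subalgebra containing `Γ(B)` as a Lie ideal (an IM
foliation over `TM`; flat classes generate `Γ(A/B)`). Then
`nabla^{A/B}_X (Y mod B) := nabla_{ρY}(X mod B) − [[Y,X]] mod B` is a well-defined flat
`A`-connection on `A/B`. -/
theorem im_foliation_induced_flat_connection
    {R ΓA : Type*} [CommRing R] [Algebra ℝ R]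
    [AddCommGroup ΓA] [Module R ΓA]
    -- Lie algebroid structure
    (ρ : ΓA →ₗ[R] Derivation ℝ R R)
    (br : ΓA → ΓA → ΓA)
    (hbr_add₁ : ∀ X Y Z : ΓA, br (X + Y) Z = br X Z + br Y Z)
    (hbr_add₂ : ∀ X Y Z : ΓA, br X (Y + Z) = br X Y + br X Z)
    (hbr_anti : ∀ X Y : ΓA, br X Y = - br Y X)
    (hbr_jacobi : ∀ X Y Z : ΓA, br X (br Y Z) = br (br X Y) Z + br Y (br X Z))
    (hbr_leib : ∀ (X : ΓA) (f : R) (Y : ΓA), br X (f • Y) = (ρ X) f • Y + f • br X Y)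
    (hanchor : ∀ X Y : ΓA, ρ (br X Y) = ⁅ρ X, ρ Y⁆)
    -- the subbundle B, a Lie subalgebroid
    (B : Submodule R ΓA)
    (hB_sub : ∀ X Y : ΓA, X ∈ B → Y ∈ B → br X Y ∈ B)
    -- flat TM-connection nabla on A/B
    (nabla : Derivation ℝ R R → (ΓA ⧸ B) → (ΓA ⧸ B))
    (hnabla_addZ : ∀ (Z W : Derivation ℝ R R) (q : ΓA ⧸ B), nabla (Z + W) q = nabla Z q + nabla W q)
    (hnabla_smulZ : ∀ (f : R) (Z : Derivation ℝ R R) (q : ΓA ⧸ B), nabla (f • Z) q = f • nabla Z q)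
    (hnabla_addq : ∀ (Z : Derivation ℝ R R) (q q' : ΓA ⧸ B), nabla Z (q + q') = nabla Z q + nabla Z q')
    (hnabla_leib : ∀ (Z : Derivation ℝ R R) (f : R) (q : ΓA ⧸ B),
      nabla Z (f • q) = Z f • q + f • nabla Z q)
    (hnabla_flat : ∀ (Z W : Derivation ℝ R R) (q : ΓA ⧸ B),
      nabla Z (nabla W q) - nabla W (nabla Z q) = nabla ⁅Z, W⁆ q)
    -- IM foliation conditions: flat sections form a Lie subalgebra with Γ(B) as ideal
    (hflat_sub : ∀ X Y : ΓA, (∀ Z, nabla Z (Submodule.Quotient.mk X) = 0) →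
      (∀ Z, nabla Z (Submodule.Quotient.mk Y) = 0) →
      (∀ Z, nabla Z (Submodule.Quotient.mk (br X Y)) = 0))
    (hflat_ideal : ∀ X Y : ΓA, (∀ Z, nabla Z (Submodule.Quotient.mk X) = 0) →
      Y ∈ B → br X Y ∈ B)
    -- Γ(A/B) is generated by flat classes
    (hgen : Submodule.span R
      ((Submodule.Quotient.mk : ΓA → ΓA ⧸ B) ''
        {X : ΓA | ∀ Z, nabla Z (Submodule.Quotient.mk X) = 0}) = ⊤) :
    -- conclusion: nabla^{A/B} is well defined, C^∞(M)-linear in X, a derivation over ρ(X),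
    -- and flat
    ∃ Dc : ΓA → (ΓA ⧸ B) → (ΓA ⧸ B),
      (∀ X Y : ΓA, Dc X (Submodule.Quotient.mk Y)
        = nabla (ρ Y) (Submodule.Quotient.mk X) - Submodule.Quotient.mk (br Y X)) ∧
      (∀ (X X' : ΓA) (q : ΓA ⧸ B), Dc (X + X') q = Dc X q + Dc X' q) ∧
      (∀ (f : R) (X : ΓA) (q : ΓA ⧸ B), Dc (f • X) q = f • Dc X q) ∧
      (∀ (X : ΓA) (q q' : ΓA ⧸ B), Dc X (q + q') = Dc X q + Dc X q') ∧
      (∀ (X : ΓA) (f : R) (q : ΓA ⧸ B), Dc X (f • q) = (ρ X) f • q + f • Dc X q) ∧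
      (∀ (X Y : ΓA) (q : ΓA ⧸ B), Dc X (Dc Y q) - Dc Y (Dc X q) = Dc (br X Y) q) :=
  im_foliation_induced_flat_connection_general ρ br hbr_add₁ hbr_add₂ hbr_anti hbr_jacobi hbr_leib
    hanchor B hB_sub nabla hnabla_addZ hnabla_smulZ hnabla_addq hnabla_leib hflat_sub hflat_ideal
    hgen
end

section
/- Let A → M be a Lie algebroid and (TM, B, ∇) an IM foliation of A over TM, with induced flat A-connection ∇^{A/B}_X(Y mod B) = ∇_{ρ(Y)}(X mod B) − [[Y,X]] mod B on A/B. Then for all X, Y ∈ Γ(A) and Z ∈ 𝔛(M): ∇_Z([[X,Y]] mod B) = (∇^{A/B}_X ∇_Z − ∇_{[ρ(X),Z]})(Y mod B) − (∇^{A/B}_Y ∇_Z − ∇_{[ρ(Y),Z]})(X mod B). -/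
/-!
Let `D(X, Y)` (`spencerDefect`) be the left side minus the right side. `D` is antisymmetric,
and the Leibniz rules of `[[-,-]]`, `∇` and `∇^{A/B}` make it `R`-linear in `X`: the
non-tensorial terms cancel by the defining formula of `∇^{A/B}`. So `D` is a tensor. It
vanishes when `X` and `Y` are `∇`-flat modulo `B` or lie in `B`, because then `X`, `Y` and
`[[X,Y]]` all have flat classes; these sections span `Γ(A)`, hence `D = 0`.
-/

open Submodule.Quotient (mk mk_add mk_neg mk_smul mk_sub)

theorem Derivation.smul_lie {K R : Type*} [CommRing K] [CommRing R] [Algebra K R]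
    (f : R) (D E : Derivation K R R) : ⁅f • D, E⁆ = f • ⁅D, E⁆ - E f • D := by
  ext g
  simp only [Derivation.commutator_apply, Derivation.smul_apply, Derivation.leibniz,
    Derivation.sub_apply, smul_eq_mul]
  ring

theorem Submodule.span_union_eq_top_of_span_image_mk {R M : Type*} [Ring R] [AddCommGroup M]
    [Module R M] {B : Submodule R M} {s : Set M}
    (h : span R ((Submodule.Quotient.mk : M → M ⧸ B) '' s) = ⊤) : span R (s ∪ B) = ⊤ := by
  rwa [span_union, span_eq, sup_comm, ← map_mkQ_eq_top, map_span]

namespace IMFoliation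

variable {R ΓA : Type*} [CommRing R] [Algebra ℝ R] [AddCommGroup ΓA] [Module R ΓA]
  {B : Submodule R ΓA}
  {ρ : ΓA →ₗ[R] Derivation ℝ R R} {br : ΓA → ΓA → ΓA}
  {nabla : Derivation ℝ R R → ΓA ⧸ B → ΓA ⧸ B} {nablaAB : ΓA → ΓA ⧸ B → ΓA ⧸ B}

theorem br_smul_left
    (hbr_anti : ∀ X Y : ΓA, br X Y = - br Y X)
    (hbr_leib : ∀ (X : ΓA) (f : R) (Y : ΓA), br X (f • Y) = (ρ X) f • Y + f • br X Y)
    (f : R) (X Y : ΓA) : br (f • X) Y = f • br X Y - (ρ Y) f • X := by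
  rw [hbr_anti, hbr_leib, hbr_anti Y X]
  module

theorem nabla_sub_right
    (hnabla_addq : ∀ (Z : Derivation ℝ R R) (q q' : ΓA ⧸ B),
      nabla Z (q + q') = nabla Z q + nabla Z q')
    (Z : Derivation ℝ R R) (a b : ΓA ⧸ B) : nabla Z (a - b) = nabla Z a - nabla Z b :=
  map_sub (AddMonoidHom.mk' (nabla Z) (hnabla_addq Z)) a b

theorem nabla_neg_right
    (hnabla_addq : ∀ (Z : Derivation ℝ R R) (q q' : ΓA ⧸ B),
      nabla Z (q + q') = nabla Z q + nabla Z q')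
    (Z : Derivation ℝ R R) (a : ΓA ⧸ B) : nabla Z (-a) = -nabla Z a :=
  map_neg (AddMonoidHom.mk' (nabla Z) (hnabla_addq Z)) a

theorem nabla_zero_right
    (hnabla_addq : ∀ (Z : Derivation ℝ R R) (q q' : ΓA ⧸ B),
      nabla Z (q + q') = nabla Z q + nabla Z q')
    (Z : Derivation ℝ R R) : nabla Z 0 = 0 :=
  map_zero (AddMonoidHom.mk' (nabla Z) (hnabla_addq Z))

theorem nabla_sub_left
    (hnabla_addZ : ∀ (Z W : Derivation ℝ R R) (q : ΓA ⧸ B),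
      nabla (Z + W) q = nabla Z q + nabla W q)
    (Z W : Derivation ℝ R R) (q : ΓA ⧸ B) : nabla (Z - W) q = nabla Z q - nabla W q :=
  map_sub (AddMonoidHom.mk' (nabla · q) (hnabla_addZ · · q)) Z W

theorem nablaAB_add_right
    (hAB : ∀ X Y : ΓA, nablaAB X (mk Y) = nabla (ρ Y) (mk X) - mk (br Y X))
    (hnabla_addZ : ∀ (Z W : Derivation ℝ R R) (q : ΓA ⧸ B),
      nabla (Z + W) q = nabla Z q + nabla W q)
    (hbr_add₁ : ∀ X Y Z : ΓA, br (X + Y) Z = br X Z + br Y Z)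
    (X : ΓA) (a b : ΓA ⧸ B) : nablaAB X (a + b) = nablaAB X a + nablaAB X b := by
  induction a using Submodule.Quotient.induction_on with | H W₁ => ?_
  induction b using Submodule.Quotient.induction_on with | H W₂ => ?_
  rw [← mk_add, hAB, hAB, hAB, map_add, hnabla_addZ, hbr_add₁, mk_add]
  abel

theorem nablaAB_smul_right
    (hAB : ∀ X Y : ΓA, nablaAB X (mk Y) = nabla (ρ Y) (mk X) - mk (br Y X))
    (hnabla_smulZ : ∀ (f : R) (Z : Derivation ℝ R R) (q : ΓA ⧸ B),
      nabla (f • Z) q = f • nabla Z q)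
    (hbr_anti : ∀ X Y : ΓA, br X Y = - br Y X)
    (hbr_leib : ∀ (X : ΓA) (f : R) (Y : ΓA), br X (f • Y) = (ρ X) f • Y + f • br X Y)
    (X : ΓA) (f : R) (a : ΓA ⧸ B) : nablaAB X (f • a) = (ρ X) f • a + f • nablaAB X a := by
  induction a using Submodule.Quotient.induction_on with | H W => ?_
  rw [← mk_smul, hAB, hAB, map_smul, hnabla_smulZ, br_smul_left hbr_anti hbr_leib,
    mk_sub, mk_smul, mk_smul]
  module

theorem nablaAB_add_left
    (hAB : ∀ X Y : ΓA, nablaAB X (mk Y) = nabla (ρ Y) (mk X) - mk (br Y X))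
    (hnabla_addq : ∀ (Z : Derivation ℝ R R) (q q' : ΓA ⧸ B),
      nabla Z (q + q') = nabla Z q + nabla Z q')
    (hbr_add₂ : ∀ X Y Z : ΓA, br X (Y + Z) = br X Y + br X Z)
    (X₁ X₂ : ΓA) (a : ΓA ⧸ B) : nablaAB (X₁ + X₂) a = nablaAB X₁ a + nablaAB X₂ a := by
  induction a using Submodule.Quotient.induction_on with | H W => ?_
  rw [hAB, hAB, hAB, mk_add, hnabla_addq, hbr_add₂, mk_add]
  abel

theorem nablaAB_smul_left
    (hAB : ∀ X Y : ΓA, nablaAB X (mk Y) = nabla (ρ Y) (mk X) - mk (br Y X))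
    (hnabla_leib : ∀ (Z : Derivation ℝ R R) (f : R) (q : ΓA ⧸ B),
      nabla Z (f • q) = Z f • q + f • nabla Z q)
    (hbr_leib : ∀ (X : ΓA) (f : R) (Y : ΓA), br X (f • Y) = (ρ X) f • Y + f • br X Y)
    (f : R) (X : ΓA) (a : ΓA ⧸ B) : nablaAB (f • X) a = f • nablaAB X a := by
  induction a using Submodule.Quotient.induction_on with | H W => ?_
  rw [hAB, hAB, mk_smul, hnabla_leib, hbr_leib, mk_add, mk_smul, mk_smul]
  module

variable (ρ br nabla nablaAB) in
def spencerTerm (Z : Derivation ℝ R R) (X Y : ΓA) : ΓA ⧸ B :=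
  nablaAB X (nabla Z (mk Y)) - nabla ⁅ρ X, Z⁆ (mk Y)

variable (ρ br nabla nablaAB) in
def spencerDefect (Z : Derivation ℝ R R) (X Y : ΓA) : ΓA ⧸ B :=
  nabla Z (mk (br X Y)) - (spencerTerm ρ nabla nablaAB Z X Y - spencerTerm ρ nabla nablaAB Z Y X)

variable (nabla) in
def flatSections : Set ΓA := {X | ∀ Z, nabla Z (mk X) = 0}

theorem mem_flatSections_of_mem
    (hnabla_addq : ∀ (Z : Derivation ℝ R R) (q q' : ΓA ⧸ B),
      nabla Z (q + q') = nabla Z q + nabla Z q')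
    {X : ΓA} (hX : X ∈ B) : X ∈ flatSections nabla := fun Z => by
  rw [(Submodule.Quotient.mk_eq_zero B).2 hX, nabla_zero_right hnabla_addq]

theorem mem_flatSections_of_mem_union
    (hnabla_addq : ∀ (Z : Derivation ℝ R R) (q q' : ΓA ⧸ B),
      nabla Z (q + q') = nabla Z q + nabla Z q')
    {X : ΓA} (hX : X ∈ flatSections nabla ∪ B) : X ∈ flatSections nabla :=
  hX.elim id (mem_flatSections_of_mem hnabla_addq)

theorem br_mem_flatSections_of_mem_union
    (hnabla_addq : ∀ (Z : Derivation ℝ R R) (q q' : ΓA ⧸ B),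
      nabla Z (q + q') = nabla Z q + nabla Z q')
    (hbr_anti : ∀ X Y : ΓA, br X Y = - br Y X)
    (hB_sub : ∀ X Y : ΓA, X ∈ B → Y ∈ B → br X Y ∈ B)
    (hflat_sub : ∀ X Y : ΓA, (∀ Z, nabla Z (mk X) = 0) → (∀ Z, nabla Z (mk Y) = 0) →
      (∀ Z, nabla Z (mk (br X Y)) = 0))
    (hflat_ideal : ∀ X Y : ΓA, (∀ Z, nabla Z (mk X) = 0) → Y ∈ B → br X Y ∈ B)
    {X Y : ΓA} (hX : X ∈ flatSections nabla ∪ B) (hY : Y ∈ flatSections nabla ∪ B) :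
    br X Y ∈ flatSections nabla := by
  rcases hX with hX | hX <;> rcases hY with hY | hY
  · exact hflat_sub X Y hX hY
  · exact mem_flatSections_of_mem hnabla_addq (hflat_ideal X Y hX hY)
  · rw [hbr_anti]
    exact mem_flatSections_of_mem hnabla_addq (B.neg_mem (hflat_ideal Y X hY hX))
  · exact mem_flatSections_of_mem hnabla_addq (hB_sub X Y hX hY)

section Tensoriality

variable (Z : Derivation ℝ R R)

theorem spencerTerm_add_left
    (hAB : ∀ X Y : ΓA, nablaAB X (mk Y) = nabla (ρ Y) (mk X) - mk (br Y X))
    (hnabla_addZ : ∀ (Z W : Derivation ℝ R R) (q : ΓA ⧸ B),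
      nabla (Z + W) q = nabla Z q + nabla W q)
    (hnabla_addq : ∀ (Z : Derivation ℝ R R) (q q' : ΓA ⧸ B),
      nabla Z (q + q') = nabla Z q + nabla Z q')
    (hbr_add₂ : ∀ X Y Z : ΓA, br X (Y + Z) = br X Y + br X Z)
    (X₁ X₂ Y : ΓA) :
    spencerTerm ρ nabla nablaAB Z (X₁ + X₂) Y
      = spencerTerm ρ nabla nablaAB Z X₁ Y + spencerTerm ρ nabla nablaAB Z X₂ Y := by
  rw [spencerTerm, spencerTerm, spencerTerm, nablaAB_add_left hAB hnabla_addq hbr_add₂,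
    map_add, add_lie, hnabla_addZ]
  abel

theorem spencerTerm_add_right
    (hAB : ∀ X Y : ΓA, nablaAB X (mk Y) = nabla (ρ Y) (mk X) - mk (br Y X))
    (hnabla_addZ : ∀ (Z W : Derivation ℝ R R) (q : ΓA ⧸ B),
      nabla (Z + W) q = nabla Z q + nabla W q)
    (hnabla_addq : ∀ (Z : Derivation ℝ R R) (q q' : ΓA ⧸ B),
      nabla Z (q + q') = nabla Z q + nabla Z q')
    (hbr_add₁ : ∀ X Y Z : ΓA, br (X + Y) Z = br X Z + br Y Z)
    (X Y₁ Y₂ : ΓA) :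
    spencerTerm ρ nabla nablaAB Z X (Y₁ + Y₂)
      = spencerTerm ρ nabla nablaAB Z X Y₁ + spencerTerm ρ nabla nablaAB Z X Y₂ := by
  rw [spencerTerm, spencerTerm, spencerTerm, mk_add, hnabla_addq, hnabla_addq,
    nablaAB_add_right hAB hnabla_addZ hbr_add₁]
  abel

theorem spencerTerm_smul_left
    (hAB : ∀ X Y : ΓA, nablaAB X (mk Y) = nabla (ρ Y) (mk X) - mk (br Y X))
    (hnabla_addZ : ∀ (Z W : Derivation ℝ R R) (q : ΓA ⧸ B),
      nabla (Z + W) q = nabla Z q + nabla W q)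
    (hnabla_smulZ : ∀ (f : R) (Z : Derivation ℝ R R) (q : ΓA ⧸ B),
      nabla (f • Z) q = f • nabla Z q)
    (hnabla_leib : ∀ (Z : Derivation ℝ R R) (f : R) (q : ΓA ⧸ B),
      nabla Z (f • q) = Z f • q + f • nabla Z q)
    (hbr_leib : ∀ (X : ΓA) (f : R) (Y : ΓA), br X (f • Y) = (ρ X) f • Y + f • br X Y)
    (f : R) (X Y : ΓA) :
    spencerTerm ρ nabla nablaAB Z (f • X) Y
      = f • spencerTerm ρ nabla nablaAB Z X Y + Z f • nabla (ρ X) (mk Y) := by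
  rw [spencerTerm, spencerTerm, nablaAB_smul_left hAB hnabla_leib hbr_leib, map_smul,
    Derivation.smul_lie, nabla_sub_left hnabla_addZ, hnabla_smulZ, hnabla_smulZ]
  module

theorem spencerTerm_smul_right
    (hAB : ∀ X Y : ΓA, nablaAB X (mk Y) = nabla (ρ Y) (mk X) - mk (br Y X))
    (hnabla_addZ : ∀ (Z W : Derivation ℝ R R) (q : ΓA ⧸ B),
      nabla (Z + W) q = nabla Z q + nabla W q)
    (hnabla_smulZ : ∀ (f : R) (Z : Derivation ℝ R R) (q : ΓA ⧸ B),
      nabla (f • Z) q = f • nabla Z q)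
    (hnabla_leib : ∀ (Z : Derivation ℝ R R) (f : R) (q : ΓA ⧸ B),
      nabla Z (f • q) = Z f • q + f • nabla Z q)
    (hbr_add₁ : ∀ X Y Z : ΓA, br (X + Y) Z = br X Z + br Y Z)
    (hbr_anti : ∀ X Y : ΓA, br X Y = - br Y X)
    (hbr_leib : ∀ (X : ΓA) (f : R) (Y : ΓA), br X (f • Y) = (ρ X) f • Y + f • br X Y)
    (f : R) (X Y : ΓA) :
    spencerTerm ρ nabla nablaAB Z X (f • Y)
      = f • spencerTerm ρ nabla nablaAB Z X Y + Z f • nablaAB X (mk Y)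
        + (ρ X) f • nabla Z (mk Y) + Z ((ρ X) f) • mk Y := by
  rw [spencerTerm, spencerTerm, mk_smul, hnabla_leib, hnabla_leib,
    nablaAB_add_right hAB hnabla_addZ hbr_add₁,
    nablaAB_smul_right hAB hnabla_smulZ hbr_anti hbr_leib,
    nablaAB_smul_right hAB hnabla_smulZ hbr_anti hbr_leib, Derivation.commutator_apply]
  module

theorem spencerDefect_swap
    (hnabla_addq : ∀ (Z : Derivation ℝ R R) (q q' : ΓA ⧸ B),
      nabla Z (q + q') = nabla Z q + nabla Z q')
    (hbr_anti : ∀ X Y : ΓA, br X Y = - br Y X)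
    (X Y : ΓA) :
    spencerDefect ρ br nabla nablaAB Z Y X = -spencerDefect ρ br nabla nablaAB Z X Y := by
  rw [spencerDefect, spencerDefect, hbr_anti Y X, mk_neg, nabla_neg_right hnabla_addq]
  abel

theorem spencerDefect_add_left
    (hAB : ∀ X Y : ΓA, nablaAB X (mk Y) = nabla (ρ Y) (mk X) - mk (br Y X))
    (hnabla_addZ : ∀ (Z W : Derivation ℝ R R) (q : ΓA ⧸ B),
      nabla (Z + W) q = nabla Z q + nabla W q)
    (hnabla_addq : ∀ (Z : Derivation ℝ R R) (q q' : ΓA ⧸ B),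
      nabla Z (q + q') = nabla Z q + nabla Z q')
    (hbr_add₁ : ∀ X Y Z : ΓA, br (X + Y) Z = br X Z + br Y Z)
    (hbr_add₂ : ∀ X Y Z : ΓA, br X (Y + Z) = br X Y + br X Z)
    (X₁ X₂ Y : ΓA) :
    spencerDefect ρ br nabla nablaAB Z (X₁ + X₂) Y
      = spencerDefect ρ br nabla nablaAB Z X₁ Y + spencerDefect ρ br nabla nablaAB Z X₂ Y := by
  rw [spencerDefect, spencerDefect, spencerDefect, hbr_add₁, mk_add, hnabla_addq,
    spencerTerm_add_left Z hAB hnabla_addZ hnabla_addq hbr_add₂,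
    spencerTerm_add_right Z hAB hnabla_addZ hnabla_addq hbr_add₁]
  abel

theorem spencerDefect_smul_left
    (hAB : ∀ X Y : ΓA, nablaAB X (mk Y) = nabla (ρ Y) (mk X) - mk (br Y X))
    (hnabla_addZ : ∀ (Z W : Derivation ℝ R R) (q : ΓA ⧸ B),
      nabla (Z + W) q = nabla Z q + nabla W q)
    (hnabla_smulZ : ∀ (f : R) (Z : Derivation ℝ R R) (q : ΓA ⧸ B),
      nabla (f • Z) q = f • nabla Z q)
    (hnabla_addq : ∀ (Z : Derivation ℝ R R) (q q' : ΓA ⧸ B),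
      nabla Z (q + q') = nabla Z q + nabla Z q')
    (hnabla_leib : ∀ (Z : Derivation ℝ R R) (f : R) (q : ΓA ⧸ B),
      nabla Z (f • q) = Z f • q + f • nabla Z q)
    (hbr_add₁ : ∀ X Y Z : ΓA, br (X + Y) Z = br X Z + br Y Z)
    (hbr_anti : ∀ X Y : ΓA, br X Y = - br Y X)
    (hbr_leib : ∀ (X : ΓA) (f : R) (Y : ΓA), br X (f • Y) = (ρ X) f • Y + f • br X Y)
    (f : R) (X Y : ΓA) :
    spencerDefect ρ br nabla nablaAB Z (f • X) Y = f • spencerDefect ρ br nabla nablaAB Z X Y := by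
  rw [spencerDefect, spencerDefect, br_smul_left hbr_anti hbr_leib, mk_sub, mk_smul, mk_smul,
    nabla_sub_right hnabla_addq, hnabla_leib, hnabla_leib,
    spencerTerm_smul_left Z hAB hnabla_addZ hnabla_smulZ hnabla_leib hbr_leib,
    spencerTerm_smul_right Z hAB hnabla_addZ hnabla_smulZ hnabla_leib hbr_add₁ hbr_anti hbr_leib,
    hAB Y X]
  module

theorem spencerDefect_eq_zero_of_flat
    (hAB : ∀ X Y : ΓA, nablaAB X (mk Y) = nabla (ρ Y) (mk X) - mk (br Y X))
    (hnabla_addZ : ∀ (Z W : Derivation ℝ R R) (q : ΓA ⧸ B),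
      nabla (Z + W) q = nabla Z q + nabla W q)
    (hbr_add₁ : ∀ X Y Z : ΓA, br (X + Y) Z = br X Z + br Y Z)
    {X Y : ΓA} (hX : X ∈ flatSections nabla) (hY : Y ∈ flatSections nabla)
    (hXY : br X Y ∈ flatSections nabla) :
    spencerDefect ρ br nabla nablaAB Z X Y = 0 := by
  have hAB_zero : ∀ X, nablaAB X 0 = 0 := fun X =>
    map_zero (AddMonoidHom.mk' (nablaAB X) (nablaAB_add_right hAB hnabla_addZ hbr_add₁ X))
  simp only [spencerDefect, spencerTerm, hX _, hY _, hXY Z, hAB_zero, sub_zero]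

theorem spencerDefect_eq_zero
    (hAB : ∀ X Y : ΓA, nablaAB X (mk Y) = nabla (ρ Y) (mk X) - mk (br Y X))
    (hnabla_addZ : ∀ (Z W : Derivation ℝ R R) (q : ΓA ⧸ B),
      nabla (Z + W) q = nabla Z q + nabla W q)
    (hnabla_smulZ : ∀ (f : R) (Z : Derivation ℝ R R) (q : ΓA ⧸ B),
      nabla (f • Z) q = f • nabla Z q)
    (hnabla_addq : ∀ (Z : Derivation ℝ R R) (q q' : ΓA ⧸ B),
      nabla Z (q + q') = nabla Z q + nabla Z q')
    (hnabla_leib : ∀ (Z : Derivation ℝ R R) (f : R) (q : ΓA ⧸ B),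
      nabla Z (f • q) = Z f • q + f • nabla Z q)
    (hbr_add₁ : ∀ X Y Z : ΓA, br (X + Y) Z = br X Z + br Y Z)
    (hbr_add₂ : ∀ X Y Z : ΓA, br X (Y + Z) = br X Y + br X Z)
    (hbr_anti : ∀ X Y : ΓA, br X Y = - br Y X)
    (hbr_leib : ∀ (X : ΓA) (f : R) (Y : ΓA), br X (f • Y) = (ρ X) f • Y + f • br X Y)
    (hB_sub : ∀ X Y : ΓA, X ∈ B → Y ∈ B → br X Y ∈ B)
    (hflat_sub : ∀ X Y : ΓA, (∀ Z, nabla Z (mk X) = 0) → (∀ Z, nabla Z (mk Y) = 0) →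
      (∀ Z, nabla Z (mk (br X Y)) = 0))
    (hflat_ideal : ∀ X Y : ΓA, (∀ Z, nabla Z (mk X) = 0) → Y ∈ B → br X Y ∈ B)
    (hgen : Submodule.span R ((mk : ΓA → ΓA ⧸ B) '' flatSections nabla) = ⊤)
    (X Y : ΓA) : spencerDefect ρ br nabla nablaAB Z X Y = 0 := by
  have add_left := spencerDefect_add_left Z hAB hnabla_addZ hnabla_addq hbr_add₁ hbr_add₂
  have smul_left := spencerDefect_smul_left Z hAB hnabla_addZ hnabla_smulZ hnabla_addq
    hnabla_leib hbr_add₁ hbr_anti hbr_leib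
  have swap := spencerDefect_swap (ρ := ρ) (nablaAB := nablaAB) Z hnabla_addq hbr_anti
  let D : ΓA →ₗ[R] ΓA →ₗ[R] ΓA ⧸ B := LinearMap.mk₂ R (spencerDefect ρ br nabla nablaAB Z)
    add_left smul_left
    (fun X Y₁ Y₂ => by rw [swap (Y₁ + Y₂) X, add_left, neg_add, ← swap Y₁, ← swap Y₂])
    (fun f X Y => by rw [swap (f • Y) X, smul_left, ← smul_neg, ← swap Y])
  have hspan := Submodule.span_union_eq_top_of_span_image_mk hgen
  have hD : D = 0 := LinearMap.ext_on hspan fun X hX => LinearMap.ext_on hspan fun Y hY =>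
    spencerDefect_eq_zero_of_flat Z hAB hnabla_addZ hbr_add₁
      (mem_flatSections_of_mem_union hnabla_addq hX)
      (mem_flatSections_of_mem_union hnabla_addq hY)
      (br_mem_flatSections_of_mem_union hnabla_addq hbr_anti hB_sub hflat_sub hflat_ideal hX hY)
  exact LinearMap.congr_fun₂ hD X Y

end Tensoriality

end IMFoliation

theorem im_foliation_second_spencer_identity_general
    {R ΓA : Type*} [CommRing R] [Algebra ℝ R]
    [AddCommGroup ΓA] [Module R ΓA]
    (ρ : ΓA →ₗ[R] Derivation ℝ R R)
    (br : ΓA → ΓA → ΓA)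
    (hbr_add₁ : ∀ X Y Z : ΓA, br (X + Y) Z = br X Z + br Y Z)
    (hbr_add₂ : ∀ X Y Z : ΓA, br X (Y + Z) = br X Y + br X Z)
    (hbr_anti : ∀ X Y : ΓA, br X Y = - br Y X)
    (hbr_leib : ∀ (X : ΓA) (f : R) (Y : ΓA), br X (f • Y) = (ρ X) f • Y + f • br X Y)
    (B : Submodule R ΓA)
    (hB_sub : ∀ X Y : ΓA, X ∈ B → Y ∈ B → br X Y ∈ B)
    (nabla : Derivation ℝ R R → (ΓA ⧸ B) → (ΓA ⧸ B))
    (hnabla_addZ : ∀ (Z W : Derivation ℝ R R) (q : ΓA ⧸ B),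
      nabla (Z + W) q = nabla Z q + nabla W q)
    (hnabla_smulZ : ∀ (f : R) (Z : Derivation ℝ R R) (q : ΓA ⧸ B),
      nabla (f • Z) q = f • nabla Z q)
    (hnabla_addq : ∀ (Z : Derivation ℝ R R) (q q' : ΓA ⧸ B),
      nabla Z (q + q') = nabla Z q + nabla Z q')
    (hnabla_leib : ∀ (Z : Derivation ℝ R R) (f : R) (q : ΓA ⧸ B),
      nabla Z (f • q) = Z f • q + f • nabla Z q)
    (hflat_sub : ∀ X Y : ΓA, (∀ Z, nabla Z (Submodule.Quotient.mk X) = 0) →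
      (∀ Z, nabla Z (Submodule.Quotient.mk Y) = 0) →
      (∀ Z, nabla Z (Submodule.Quotient.mk (br X Y)) = 0))
    (hflat_ideal : ∀ X Y : ΓA, (∀ Z, nabla Z (Submodule.Quotient.mk X) = 0) →
      Y ∈ B → br X Y ∈ B)
    (hgen : Submodule.span R
      ((Submodule.Quotient.mk : ΓA → ΓA ⧸ B) ''
        {X : ΓA | ∀ Z, nabla Z (Submodule.Quotient.mk X) = 0}) = ⊤)
    -- the induced A-connection ∇^{A/B}
    (nablaAB : ΓA → (ΓA ⧸ B) → (ΓA ⧸ B))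
    (hAB : ∀ X Y : ΓA, nablaAB X (Submodule.Quotient.mk Y)
      = nabla (ρ Y) (Submodule.Quotient.mk X) - Submodule.Quotient.mk (br Y X)) :
    ∀ (X Y : ΓA) (Z : Derivation ℝ R R),
      nabla Z (Submodule.Quotient.mk (br X Y))
        = (nablaAB X (nabla Z (Submodule.Quotient.mk Y))
            - nabla ⁅ρ X, Z⁆ (Submodule.Quotient.mk Y))
          - (nablaAB Y (nabla Z (Submodule.Quotient.mk X))
            - nabla ⁅ρ Y, Z⁆ (Submodule.Quotient.mk X)) := by
  intro X Y Z
  have h := IMFoliation.spencerDefect_eq_zero Z hAB hnabla_addZ hnabla_smulZ hnabla_addq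
    hnabla_leib hbr_add₁ hbr_add₂ hbr_anti hbr_leib hB_sub hflat_sub hflat_ideal hgen X Y
  rwa [IMFoliation.spencerDefect, IMFoliation.spencerTerm, IMFoliation.spencerTerm,
    sub_eq_zero] at h

/-- Let `A → M` be a Lie algebroid with an IM foliation `(TM, B, ∇)` over
`TM`, and let `∇^{A/B}` (here `nablaAB`) be the induced flat `A`-connection on `A/B`,
`∇^{A/B}_X (Y mod B) = ∇_{ρY}(X mod B) − [[Y,X]] mod B`. Then for all `X, Y ∈ Γ(A)` and
`Z ∈ 𝔛(M)`:
`∇_Z([[X,Y]] mod B) = (∇^{A/B}_X ∇_Z − ∇_{[ρX,Z]})(Y mod B) − (∇^{A/B}_Y ∇_Z − ∇_{[ρY,Z]})(X mod B)`. -/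
theorem im_foliation_second_spencer_identity
    {R ΓA : Type*} [CommRing R] [Algebra ℝ R]
    [AddCommGroup ΓA] [Module R ΓA]
    (ρ : ΓA →ₗ[R] Derivation ℝ R R)
    (br : ΓA → ΓA → ΓA)
    (hbr_add₁ : ∀ X Y Z : ΓA, br (X + Y) Z = br X Z + br Y Z)
    (hbr_add₂ : ∀ X Y Z : ΓA, br X (Y + Z) = br X Y + br X Z)
    (hbr_anti : ∀ X Y : ΓA, br X Y = - br Y X)
    (hbr_jacobi : ∀ X Y Z : ΓA, br X (br Y Z) = br (br X Y) Z + br Y (br X Z))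
    (hbr_leib : ∀ (X : ΓA) (f : R) (Y : ΓA), br X (f • Y) = (ρ X) f • Y + f • br X Y)
    (hanchor : ∀ X Y : ΓA, ρ (br X Y) = ⁅ρ X, ρ Y⁆)
    (B : Submodule R ΓA)
    (hB_sub : ∀ X Y : ΓA, X ∈ B → Y ∈ B → br X Y ∈ B)
    (nabla : Derivation ℝ R R → (ΓA ⧸ B) → (ΓA ⧸ B))
    (hnabla_addZ : ∀ (Z W : Derivation ℝ R R) (q : ΓA ⧸ B),
      nabla (Z + W) q = nabla Z q + nabla W q)
    (hnabla_smulZ : ∀ (f : R) (Z : Derivation ℝ R R) (q : ΓA ⧸ B),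
      nabla (f • Z) q = f • nabla Z q)
    (hnabla_addq : ∀ (Z : Derivation ℝ R R) (q q' : ΓA ⧸ B),
      nabla Z (q + q') = nabla Z q + nabla Z q')
    (hnabla_leib : ∀ (Z : Derivation ℝ R R) (f : R) (q : ΓA ⧸ B),
      nabla Z (f • q) = Z f • q + f • nabla Z q)
    (hnabla_flat : ∀ (Z W : Derivation ℝ R R) (q : ΓA ⧸ B),
      nabla Z (nabla W q) - nabla W (nabla Z q) = nabla ⁅Z, W⁆ q)
    (hflat_sub : ∀ X Y : ΓA, (∀ Z, nabla Z (Submodule.Quotient.mk X) = 0) →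
      (∀ Z, nabla Z (Submodule.Quotient.mk Y) = 0) →
      (∀ Z, nabla Z (Submodule.Quotient.mk (br X Y)) = 0))
    (hflat_ideal : ∀ X Y : ΓA, (∀ Z, nabla Z (Submodule.Quotient.mk X) = 0) →
      Y ∈ B → br X Y ∈ B)
    (hgen : Submodule.span R
      ((Submodule.Quotient.mk : ΓA → ΓA ⧸ B) ''
        {X : ΓA | ∀ Z, nabla Z (Submodule.Quotient.mk X) = 0}) = ⊤)
    -- the induced A-connection ∇^{A/B}
    (nablaAB : ΓA → (ΓA ⧸ B) → (ΓA ⧸ B))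
    (hAB : ∀ X Y : ΓA, nablaAB X (Submodule.Quotient.mk Y)
      = nabla (ρ Y) (Submodule.Quotient.mk X) - Submodule.Quotient.mk (br Y X)) :
    ∀ (X Y : ΓA) (Z : Derivation ℝ R R),
      nabla Z (Submodule.Quotient.mk (br X Y))
        = (nablaAB X (nabla Z (Submodule.Quotient.mk Y))
            - nabla ⁅ρ X, Z⁆ (Submodule.Quotient.mk Y))
          - (nablaAB Y (nabla Z (Submodule.Quotient.mk X))
            - nabla ⁅ρ Y, Z⁆ (Submodule.Quotient.mk X)) :=
  im_foliation_second_spencer_identity_general ρ br hbr_add₁ hbr_add₂ hbr_anti hbr_leib B hB_sub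
    nabla hnabla_addZ hnabla_smulZ hnabla_addq hnabla_leib hflat_sub hflat_ideal hgen nablaAB hAB
end

section
/- Let L → M be a line bundle and (L, {−,−}) an abstract Jacobi structure (a Lie bracket on Γ(L) that is a first-order differential operator in each entry). Let (J^1 L, ρ, [[-,-]]) be the associated Lie algebroid, determined by [[j^1 λ, j^1 μ]] = j^1{λ,μ} and ρ(j^1 λ) = symbol of {λ,−}, together with its representation ∇^L on L given by ∇^L_{j^1 λ} μ = {λ, μ}. Then the identity [[j^1 λ, j^1 μ]] = j^1(∇^L_{j^1 λ} μ) holds for all λ, μ ∈ Γ(L), and conversely any Lie algebroid structure on J^1 L with a representation on L satisfying this identity yields a Jacobi bracket by {λ,μ} := ∇^L_{j^1 λ} μ: this bracket is antisymmetric and satisfies the Jacobi identity. -/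
/-- Let `L → M` be a line bundle (sections `L`, over `R = C^∞(M)`), `J` the
sections of the first jet bundle `J¹L`, with injective jet prolongation `j = j¹`. Given a
Lie algebroid structure `(ρ, br)` on `J¹L` together with a representation `∇^L` (`nab`)
of it on `L` satisfying the identity `[[j¹λ, j¹μ]] = j¹(∇^L_{j¹λ} μ)`, the bracket
`{λ,μ} := ∇^L_{j¹λ} μ` is antisymmetric and satisfies the Jacobi identity (it is an
abstract Jacobi structure). -/
theorem jet_algebroid_gives_jacobi_bracket
    {R L J : Type*} [CommRing R] [Algebra ℝ R]
    [AddCommGroup L] [Module R L]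
    [AddCommGroup J] [Module R J]
    -- the first jet prolongation, injective
    (j : L → J)
    (hj_add : ∀ lam mu : L, j (lam + mu) = j lam + j mu)
    (hj_inj : Function.Injective j)
    -- Lie algebroid structure on J¹L
    (ρ : J →ₗ[R] Derivation ℝ R R)
    (br : J → J → J)
    (hbr_add₁ : ∀ ξ η ζ : J, br (ξ + η) ζ = br ξ ζ + br η ζ)
    (hbr_add₂ : ∀ ξ η ζ : J, br ξ (η + ζ) = br ξ η + br ξ ζ)
    (hbr_anti : ∀ ξ η : J, br ξ η = - br η ξ)
    (hbr_jacobi : ∀ ξ η ζ : J, br ξ (br η ζ) = br (br ξ η) ζ + br η (br ξ ζ))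
    (hbr_leib : ∀ (ξ : J) (f : R) (η : J), br ξ (f • η) = (ρ ξ) f • η + f • br ξ η)
    (hanchor : ∀ ξ η : J, ρ (br ξ η) = ⁅ρ ξ, ρ η⁆)
    -- representation of J¹L on L
    (nab : J → L → L)
    (hnab_addξ : ∀ (ξ η : J) (lam : L), nab (ξ + η) lam = nab ξ lam + nab η lam)
    (hnab_smulξ : ∀ (f : R) (ξ : J) (lam : L), nab (f • ξ) lam = f • nab ξ lam)
    (hnab_addlam : ∀ (ξ : J) (lam mu : L), nab ξ (lam + mu) = nab ξ lam + nab ξ mu)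
    (hnab_leib : ∀ (ξ : J) (f : R) (lam : L), nab ξ (f • lam) = (ρ ξ) f • lam + f • nab ξ lam)
    (hnab_flat : ∀ (ξ η : J) (lam : L),
      nab ξ (nab η lam) - nab η (nab ξ lam) = nab (br ξ η) lam)
    -- the compatibility identity [[j¹λ, j¹μ]] = j¹(∇^L_{j¹λ} μ)
    (hident : ∀ lam mu : L, br (j lam) (j mu) = j (nab (j lam) mu)) :
    (∀ lam mu : L, nab (j lam) mu = - nab (j mu) lam) ∧
    (∀ lam mu nu : L,
      nab (j lam) (nab (j mu) nu)
        = nab (j (nab (j lam) mu)) nu + nab (j mu) (nab (j lam) nu)) := by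
  have hj0 : j 0 = 0 := by
    have := hj_add 0 0
    simp at this
    linear_combination (norm := abel_nf) this
  have hjneg : ∀ x : L, j (-x) = - j x := by
    intro x
    have := hj_add x (-x)
    simp [hj0] at this
    exact eq_neg_of_add_eq_zero_right this.symm
  constructor
  · intro lam mu
    apply hj_inj
    rw [hjneg, ← hident, ← hident, hbr_anti]
  · intro lam mu nu
    have h := hnab_flat (j lam) (j mu) nu
    rw [hident] at h
    linear_combination (norm := abel_nf) h
end
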